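/- Let e : [0,1] x D -> [0,1]^3 be (1/243)-close-expanding with respect to the pseudometric d((x,a),(y,b)) = |x-y|, i.e., ||e(p)-e(q)||_2 >= (1/243) sqrt(d(p,q)). Define T = { (x/(2*243^2), e(x, y)) : x in [0,1], y in D } as a subset of R^4 = R x R^3. Then for any two points P = (s, u) and Q = (s', u') in T with s != s', writing epsilon = |s - s'| for the difference of first coordinates and l = ||u - u'||_2, we have l >= sqrt(2 * epsilon); in particular l^2 / 2 >= epsilon. -/

import Mathlib

-- `ℝ⁴` identified with `ℝ × ℝ³`, carrying the Euclidean (`L²`) metric.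
abbrev R4 : Type := WithLp 2 (ℝ × EuclideanSpace ℝ (Fin 3))

-- The point of `ℝ⁴` with first coordinate `x` and last three coordinates `u`.
noncomputable def pt (x : ℝ) (u : EuclideanSpace ℝ (Fin 3)) : R4 :=
  (WithLp.equiv 2 (ℝ × EuclideanSpace ℝ (Fin 3))).symm (x, u)

-- The unit cube `[0,1]³`.
def cube : Set (EuclideanSpace ℝ (Fin 3)) := {u | ∀ i, u i ∈ Set.Icc (0:ℝ) 1}

-- The set `T = {(x/(2·243²), e(x,y)) : x ∈ [0,1], y ∈ D} ⊆ ℝ⁴`.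
def T {D : Type*} (e : Set.Icc (0:ℝ) 1 × D → EuclideanSpace ℝ (Fin 3)) : Set R4 :=
  {z | ∃ x : Set.Icc (0:ℝ) 1, ∃ y : D, z = pt ((x : ℝ) / (2 * 243 ^ 2)) (e (x, y))}

/-! The first coordinate is scaled by `1 / (2 · 243²)` precisely so that `√(2 ε)` equals
`√|x - x'| / 243`, the lower bound that the expansion property gives for `l`. -/

theorem sqrt_two_mul_abs_div_sub_div (a b : ℝ) {c : ℝ} (hc : 0 ≤ c) :
    √(2 * |a / (2 * c ^ 2) - b / (2 * c ^ 2)|) = 1 / c * √|a - b| := by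
  rw [div_sub_div_same, abs_div, abs_of_nonneg (by positivity : (0 : ℝ) ≤ 2 * c ^ 2),
    ← mul_div_assoc, mul_div_mul_left _ _ two_ne_zero, Real.sqrt_div' _ (sq_nonneg c),
    Real.sqrt_sq hc, one_div_mul_eq_div]

theorem le_sq_div_two_of_sqrt_two_mul_le {ε l : ℝ} (h : √(2 * ε) ≤ l) : ε ≤ l ^ 2 / 2 := by
  have := (Real.sqrt_le_iff.mp h).2
  linarith

@[simp]
theorem equiv_pt (x : ℝ) (u : EuclideanSpace ℝ (Fin 3)) : WithLp.equiv 2 _ (pt x u) = (x, u) :=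
  Equiv.apply_symm_apply _ _

theorem stmt_11 {D : Type} (e : Set.Icc (0:ℝ) 1 × D → EuclideanSpace ℝ (Fin 3))
    (he : ∀ p q, ‖e p - e q‖ ≥ (1 / 243) * Real.sqrt |(p.1 : ℝ) - (q.1 : ℝ)|)
    (P Q : R4) (hP : P ∈ T e) (hQ : Q ∈ T e) :
    ‖((WithLp.equiv 2 _) P).2 - ((WithLp.equiv 2 _) Q).2‖ ≥
        Real.sqrt (2 * |((WithLp.equiv 2 _) P).1 - ((WithLp.equiv 2 _) Q).1|) ∧
      ‖((WithLp.equiv 2 _) P).2 - ((WithLp.equiv 2 _) Q).2‖ ^ 2 / 2 ≥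
        |((WithLp.equiv 2 _) P).1 - ((WithLp.equiv 2 _) Q).1| := by
  obtain ⟨x, y, rfl⟩ := hP
  obtain ⟨x', y', rfl⟩ := hQ
  have hl : √(2 * |(x : ℝ) / (2 * 243 ^ 2) - x' / (2 * 243 ^ 2)|) ≤ ‖e (x, y) - e (x', y')‖ := by
    rw [sqrt_two_mul_abs_div_sub_div _ _ (by norm_num)]
    exact he (x, y) (x', y')
  simp only [equiv_pt]
  exact ⟨hl, le_sq_div_two_of_sqrt_two_mul_le hl⟩
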